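/- arXiv:2507.06557 — 2 statements merged into one kernel-verified Lean document; each statement's English description precedes it below -/
import Mathlib

section
/- Let m ≥ 1 be an integer and a ∈ (0, 1/5]. Then for every real x ≥ 5^(1+1/m) * a^(-1/m) * (log(1/a))^(1+1/m), one has (log x + 1)^(m+1) / x^m ≤ a. -/
/-!
Put `L = log (1/a)` and `x₀ = 5^(1+1/m) a^(-1/m) L^(1+1/m)`, so that `a x₀^m = (5L)^(m+1)` and
`log x₀ + 2 ≤ 5L`. Writing `x = x₀ s²` with `s ≥ 1`, the bound `log s ≤ s - 1` gives
`log x + 1 ≤ 5L s`, and raising to the power `m + 1` (using `s^(m+1) ≤ s^(2m)`) yields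
`(log x + 1)^(m+1) ≤ (5L)^(m+1) s^(2m) = a x^m`.
-/

open Real

theorem log_add_one_pow_mul_pow_le {m : ℕ} (hm : 1 ≤ m) {c x y : ℝ} (hc : 2 ≤ c) (hy : 1 ≤ y)
    (hyc : log y + 2 ≤ c) (hyx : y ≤ x) :
    (log x + 1) ^ (m + 1) * y ^ m ≤ c ^ (m + 1) * x ^ m := by
  have hy₀ : 0 < y := by linarith
  set s := √(x / y)
  have hs : 1 ≤ s := one_le_sqrt.2 ((one_le_div hy₀).2 hyx)
  have hx : x = y * s ^ 2 := by
    rw [sq_sqrt (div_nonneg (by linarith) hy₀.le)]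
    field_simp
  have hlog_x : 0 ≤ log x + 1 := by linarith [log_nonneg (hy.trans hyx)]
  have hlog_x_le : log x + 1 ≤ c * s := by
    have hlog_s : log s ≤ s - 1 := log_le_sub_one_of_pos (by linarith)
    rw [hx, log_mul hy₀.ne' (by positivity), log_pow]
    push_cast
    nlinarith
  calc (log x + 1) ^ (m + 1) * y ^ m ≤ (c * s) ^ (m + 1) * y ^ m := by gcongr
    _ = c ^ (m + 1) * s ^ (m + 1) * y ^ m := by ring
    _ ≤ c ^ (m + 1) * s ^ (2 * m) * y ^ m := by gcongr; omega
    _ = c ^ (m + 1) * x ^ m := by rw [hx]; ring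

theorem log_add_one_pow_div_pow_le_of_mul_pow_eq {m : ℕ} (hm : 1 ≤ m) {a c x y : ℝ}
    (hc : 2 ≤ c) (hy : 1 ≤ y) (hyc : log y + 2 ≤ c) (hay : a * y ^ m = c ^ (m + 1))
    (hyx : y ≤ x) : (log x + 1) ^ (m + 1) / x ^ m ≤ a := by
  have key := log_add_one_pow_mul_pow_le hm hc hy hyc hyx
  rw [← hay] at key
  rw [div_le_iff₀ (pow_pos (by linarith) m)]
  exact le_of_mul_le_mul_right (key.trans_eq (by ring)) (pow_pos (by linarith) m)

theorem rpow_one_add_one_div_pow {b : ℝ} (hb : 0 ≤ b) {m : ℕ} (hm : m ≠ 0) :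
    (b ^ (1 + 1 / (m : ℝ))) ^ m = b ^ (m + 1) := by
  rw [← rpow_natCast, ← rpow_mul hb, ← rpow_natCast]
  congr 1
  push_cast
  field_simp

theorem rpow_neg_one_div_pow {a : ℝ} (ha : 0 ≤ a) {m : ℕ} (hm : m ≠ 0) :
    (a ^ (-(1 / (m : ℝ)))) ^ m = a⁻¹ := by
  rw [← rpow_natCast, ← rpow_mul ha, neg_mul, one_div_mul_cancel (by exact_mod_cast hm),
    rpow_neg_one]

theorem log_five_le_log_one_div {a : ℝ} (ha : 0 < a) (ha' : a ≤ 1 / 5) : log 5 ≤ log (1 / a) :=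
  log_le_log (by norm_num) (by rw [le_div_iff₀ ha]; linarith)

noncomputable def logPowThreshold (m : ℕ) (a : ℝ) : ℝ :=
  5 ^ (1 + 1 / (m : ℝ)) * a ^ (-(1 / (m : ℝ))) * log (1 / a) ^ (1 + 1 / (m : ℝ))

section logPowThreshold

variable {m : ℕ} {a : ℝ}

theorem one_le_logPowThreshold (ha : 0 < a) (ha' : a ≤ 1 / 5) : 1 ≤ logPowThreshold m a := by
  have hL : 1 ≤ log (1 / a) := by linarith [log_five_gt_d9, log_five_le_log_one_div ha ha']
  have he : (0 : ℝ) ≤ 1 + 1 / m := by positivity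
  exact one_le_mul_of_one_le_of_one_le
    (one_le_mul_of_one_le_of_one_le (one_le_rpow (by norm_num) he)
      (one_le_rpow_of_pos_of_le_one_of_nonpos ha (by linarith) (neg_nonpos.2 (by positivity))))
    (one_le_rpow hL he)

theorem mul_logPowThreshold_pow (hm : m ≠ 0) (ha : 0 < a) (ha' : a ≤ 1) :
    a * logPowThreshold m a ^ m = (5 * log (1 / a)) ^ (m + 1) := by
  have hL : 0 ≤ log (1 / a) := log_nonneg (by rw [le_div_iff₀ ha]; linarith)
  rw [logPowThreshold, mul_pow, mul_pow, rpow_one_add_one_div_pow (by norm_num) hm,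
    rpow_one_add_one_div_pow hL hm, rpow_neg_one_div_pow ha.le hm]
  field_simp
  ring

theorem log_logPowThreshold_add_two_le (hm : 1 ≤ m) (ha : 0 < a) (ha' : a ≤ 1 / 5) :
    log (logPowThreshold m a) + 2 ≤ 5 * log (1 / a) := by
  have h5L := log_five_le_log_one_div ha ha'
  set L := log (1 / a) with hL
  have hL₁ : 1 < L := by linarith [log_five_gt_d9]
  have hL₀ : 0 < L := by linarith
  have hx₀ : 0 < logPowThreshold m a := by linarith [one_le_logPowThreshold (m := m) ha ha']
  have h := congrArg log (mul_logPowThreshold_pow (m := m) (by omega) ha (by linarith))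
  rw [log_mul ha.ne' (by positivity), log_pow, log_pow, log_mul (by norm_num) hL₀.ne'] at h
  have hlog_a : log a = -L := by rw [hL, one_div, log_inv, neg_neg]
  have hlog_L : log L ≤ L - 1 := log_le_sub_one_of_pos hL₀
  have hm' : (1 : ℝ) ≤ m := by exact_mod_cast hm
  push_cast at h
  have hm_mul : (m : ℝ) * (log (logPowThreshold m a) + 2) ≤ m * (5 * L) := by
    nlinarith [mul_le_mul_of_nonneg_left (by linarith : log 5 + log L ≤ 2 * L - 1)
      (by linarith : (0 : ℝ) ≤ m + 1), mul_nonneg (by linarith : (0 : ℝ) ≤ m - 1)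
      (by linarith : (0 : ℝ) ≤ 3 * L - 1)]
  exact le_of_mul_le_mul_left hm_mul (by linarith)

end logPowThreshold

theorem stmt_3 (m : ℕ) (hm : 1 ≤ m) (a : ℝ) (ha : 0 < a) (ha' : a ≤ 1 / 5) :
    ∀ x : ℝ,
      (5 : ℝ) ^ (1 + 1 / (m : ℝ)) * a ^ (-(1 / (m : ℝ))) *
          (Real.log (1 / a)) ^ (1 + 1 / (m : ℝ)) ≤ x →
      (Real.log x + 1) ^ (m + 1) / x ^ m ≤ a := by
  intro x hx
  have hL : 2 ≤ 5 * log (1 / a) := by linarith [log_five_gt_d9, log_five_le_log_one_div ha ha']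
  exact log_add_one_pow_div_pow_le_of_mul_pow_eq hm hL (one_le_logPowThreshold ha ha')
    (log_logPowThreshold_add_two_le hm ha ha') (mul_logPowThreshold_pow (by omega) ha (by linarith))
    hx
end

section
/- Let c ≥ 1, g > 0, k ≥ 1, N ≥ 1 be reals, p ≥ 1, m ≥ 1 integers, and ε ∈ (0,1) with p_0 = ⌈log(3N/ε)⌉. Suppose α_q ≤ (q-1)! (2kg)^(q-1) N g for all integers q ≥ 2. Then for all integers q ≥ m+1, n ≥ 1, the sum Σ over tuples (q_1,...,q_n) with p+1 ≤ q_i ≤ p_0 and q_1+...+q_n = q+n-1 of ∏_{i=1}^n α_{q_i} is at most (4 * max((p+1) N^(1/(p+1)), e^3 p_0) * k * g)^(q+n-1). -/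
/-!
Since `(q - 1)! ≤ q ^ (q - 1)`, each `α_q` with `p + 1 ≤ q ≤ p₀` is at most `(2 M k g) ^ q / 2`,
where `M` bounds `q N^(1/q)`: on `q ≤ log N` the map `q ↦ q N^(1/q)` is decreasing, so it is at
most `(p+1) N^(1/(p+1))`, and beyond `log N` one has `N^(1/q) ≤ e`. A tuple of `n` such indices
summing to `s` thus contributes at most `(2 M k g) ^ s / 2 ^ n`, and there are at most
`2 ^ (n + s)` such tuples.
-/

open Finset Real

theorem Finset.Nat.card_antidiagonalTuple (n s : ℕ) :
    #(Finset.Nat.antidiagonalTuple n s) = (n + s - 1).choose s := by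
  have := card_finsuppAntidiag_nat_eq_choose (s := (univ : Finset (Fin n))) s
  rw [card_fin, finsuppAntidiag, card_map, card_attach] at this
  rw [← piAntidiag_univ_fin_eq_antidiagonalTuple, this]

theorem sum_prod_le_two_mul_pow {n s : ℕ} {S : Finset (Fin n → ℕ)}
    (hS : S ⊆ Finset.Nat.antidiagonalTuple n s) {β : ℕ → ℝ} {x : ℝ} (hx : 0 ≤ x)
    (hβ₀ : ∀ j, 0 ≤ β j) (hβ : ∀ f ∈ S, ∀ i, β (f i) ≤ x ^ f i / 2) :
    ∑ f ∈ S, ∏ i, β (f i) ≤ (2 * x) ^ s := by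
  calc ∑ f ∈ S, ∏ i, β (f i)
      ≤ ∑ _f ∈ S, x ^ s / 2 ^ n := sum_le_sum fun f hf => by
        calc ∏ i, β (f i) ≤ ∏ i, x ^ f i / 2 :=
              prod_le_prod (fun i _ => hβ₀ _) (fun i _ => hβ f hf i)
          _ = x ^ s / 2 ^ n := by
              rw [prod_div_distrib, prod_pow_eq_pow_sum,
                (Finset.Nat.mem_antidiagonalTuple.1 (hS hf)), prod_const, card_univ,
                Fintype.card_fin]
    _ = #S * (x ^ s / 2 ^ n) := by rw [sum_const, nsmul_eq_mul]
    _ ≤ 2 ^ (n + s) * (x ^ s / 2 ^ n) := by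
        gcongr
        have hcard : #S ≤ 2 ^ (n + s) :=
          (card_le_card hS).trans <| (Finset.Nat.card_antidiagonalTuple n s).trans_le <|
            (Nat.choose_le_two_pow _ _).trans (Nat.pow_le_pow_right two_pos (by omega))
        exact_mod_cast hcard
    _ = (2 * x) ^ s := by field_simp; ring

theorem factorial_mul_pow_le {q : ℕ} (hq : 1 ≤ q) {k g N : ℝ} (hk : 1 ≤ k) (hg : 0 ≤ g)
    (hN : 0 ≤ N) :
    ((q - 1).factorial : ℝ) * (2 * k * g) ^ (q - 1) * N * g
      ≤ (2 * ((q : ℝ) * N ^ (1 / (q : ℝ))) * k * g) ^ q / 2 := by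
  obtain ⟨e, rfl⟩ : ∃ e, q = e + 1 := ⟨q - 1, by omega⟩
  rw [Nat.add_sub_cancel]
  push_cast
  have hroot :
      (((e : ℝ) + 1) * N ^ (1 / ((e : ℝ) + 1))) ^ (e + 1) = ((e : ℝ) + 1) ^ (e + 1) * N := by
    rw [mul_pow, ← Real.rpow_natCast (N ^ _), ← Real.rpow_mul hN]
    norm_num [div_mul_cancel₀, Nat.cast_add_one_ne_zero]
  have hfact : (e.factorial : ℝ) ≤ ((e : ℝ) + 1) ^ e := by
    have := (Nat.factorial_le_pow e).trans (Nat.pow_le_pow_left e.le_succ e)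
    exact_mod_cast this
  have hek : 1 ≤ ((e : ℝ) + 1) * k := by nlinarith [(e.cast_nonneg : (0 : ℝ) ≤ e)]
  calc (e.factorial : ℝ) * (2 * k * g) ^ e * N * g
      ≤ ((e : ℝ) + 1) ^ e * (2 * k * g) ^ e * N * g := by gcongr
    _ ≤ ((e : ℝ) + 1) ^ e * (2 * k * g) ^ e * N * g * (((e : ℝ) + 1) * k) :=
        le_mul_of_one_le_right (by positivity) hek
    _ = _ := by
        rw [show ∀ y : ℝ, 2 * y * k * g = y * (2 * k * g) from fun y => by ring,
          mul_pow (((e : ℝ) + 1) * _), hroot]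
        ring

theorem rpow_one_div_le_exp_one {N t : ℝ} (hN : 0 < N) (ht : 0 < t) (h : log N ≤ t) :
    N ^ (1 / t) ≤ exp 1 := by
  rw [rpow_def_of_pos hN, exp_le_exp, mul_one_div, div_le_one ht]
  exact h

theorem mul_rpow_one_div_le_of_le_log {N a t : ℝ} (hN : 0 < N) (ha : 0 < a) (hat : a ≤ t)
    (ht : t ≤ log N) : t * N ^ (1 / t) ≤ a * N ^ (1 / a) := by
  have ht0 : 0 < t := ha.trans_le hat
  have hlog : log t - log a ≤ (t - a) / a := by
    have := log_le_sub_one_of_pos (div_pos ht0 ha)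
    rwa [log_div ht0.ne' ha.ne', div_sub_one ha.ne'] at this
  have hgap : (t - a) / a ≤ log N / a - log N / t := by
    rw [div_sub_div _ _ ha.ne' ht0.ne', div_le_div_iff₀ ha (mul_pos ha ht0)]
    nlinarith [mul_le_mul_of_nonneg_left ht (sub_nonneg.2 hat)]
  have hexp : ∀ x, 0 < x → x * N ^ (1 / x) = exp (log x + log N / x) := fun x hx => by
    rw [exp_add, exp_log hx, rpow_def_of_pos hN, mul_one_div]
  rw [hexp t ht0, hexp a ha, exp_le_exp]
  linarith

theorem mul_rpow_one_div_le_max {N a t P : ℝ} (hN : 0 < N) (ha : 0 < a) (hat : a ≤ t)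
    (htP : t ≤ P) : t * N ^ (1 / t) ≤ max (a * N ^ (1 / a)) (exp 1 * P) := by
  rcases le_total t (log N) with h | h
  · exact le_max_of_le_left (mul_rpow_one_div_le_of_le_log hN ha hat h)
  · refine le_max_of_le_right ?_
    rw [mul_comm (exp 1)]
    exact mul_le_mul htP (rpow_one_div_le_exp_one hN (ha.trans_le hat) h) (by positivity)
      (by linarith)

theorem stmt_7_general (g k N ε : ℝ) (hg : 0 < g) (hk : 1 ≤ k) (hN : 1 ≤ N)
    (p m : ℕ) (hp : 1 ≤ p)
    (α : ℕ → ℝ) (hα : ∀ q, 0 ≤ α q)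
    (hbound : ∀ q : ℕ, 2 ≤ q →
      α q ≤ (Nat.factorial (q - 1) : ℝ) * (2 * k * g) ^ (q - 1) * N * g) :
    ∀ q n : ℕ, m + 1 ≤ q → 1 ≤ n →
      ∑ f ∈ (Finset.Nat.antidiagonalTuple n (q + n - 1)).filter
          (fun f => ∀ i, p + 1 ≤ f i ∧ f i ≤ ⌈Real.log (3 * N / ε)⌉₊),
        ∏ i, α (f i)
      ≤ (4 * max (((p : ℝ) + 1) * N ^ (1 / ((p : ℝ) + 1)))
            (Real.exp 3 * (⌈Real.log (3 * N / ε)⌉₊ : ℝ)) * k * g) ^ (q + n - 1) := by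
  intro q n _ _
  have hN0 : 0 < N := by linarith
  set p₀ := ⌈log (3 * N / ε)⌉₊
  set M := max (((p : ℝ) + 1) * N ^ (1 / ((p : ℝ) + 1))) (exp 3 * (p₀ : ℝ))
  have hM : 0 ≤ M := le_max_of_le_left (by positivity)
  have hbase : ∀ j : ℕ, p + 1 ≤ j → j ≤ p₀ → (j : ℝ) * N ^ (1 / (j : ℝ)) ≤ M :=
    fun j hpj hjp₀ =>
    (mul_rpow_one_div_le_max (P := p₀) hN0 (by positivity) (by exact_mod_cast hpj)
      (by exact_mod_cast hjp₀)).trans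
      (max_le_max le_rfl (by gcongr; norm_num))
  calc _ ≤ (2 * (2 * M * k * g)) ^ (q + n - 1) := by
        refine sum_prod_le_two_mul_pow (filter_subset _ _) (by positivity) hα fun f hf i => ?_
        obtain ⟨hlo, hhi⟩ := (mem_filter.1 hf).2 i
        calc α (f i) ≤ (2 * ((f i : ℝ) * N ^ (1 / (f i : ℝ))) * k * g) ^ f i / 2 :=
              (hbound _ (by omega)).trans
                (factorial_mul_pow_le (by omega) hk hg.le hN0.le)
          _ ≤ (2 * M * k * g) ^ f i / 2 := by
              have := hbase _ hlo hhi
              gcongr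
    _ = _ := by ring

theorem stmt_7 (c g k N ε : ℝ) (hc : 1 ≤ c) (hg : 0 < g) (hk : 1 ≤ k) (hN : 1 ≤ N)
    (hε : ε ∈ Set.Ioo (0 : ℝ) 1) (p m : ℕ) (hp : 1 ≤ p) (hm : 1 ≤ m)
    (α : ℕ → ℝ) (hα : ∀ q, 0 ≤ α q)
    (hbound : ∀ q : ℕ, 2 ≤ q →
      α q ≤ (Nat.factorial (q - 1) : ℝ) * (2 * k * g) ^ (q - 1) * N * g) :
    ∀ q n : ℕ, m + 1 ≤ q → 1 ≤ n →
      ∑ f ∈ (Finset.Nat.antidiagonalTuple n (q + n - 1)).filter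
          (fun f => ∀ i, p + 1 ≤ f i ∧ f i ≤ ⌈Real.log (3 * N / ε)⌉₊),
        ∏ i, α (f i)
      ≤ (4 * max (((p : ℝ) + 1) * N ^ (1 / ((p : ℝ) + 1)))
            (Real.exp 3 * (⌈Real.log (3 * N / ε)⌉₊ : ℝ)) * k * g) ^ (q + n - 1) :=
  stmt_7_general g k N ε hg hk hN p m hp α hα hbound
end
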